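/- arXiv:1706.04766 — 3 statements merged into one kernel-verified Lean document; each statement's English description precedes it below -/
import Mathlib

section
/- Let M(η) be a family of self-adjoint matrices indexed by a finite set E, depending C^1 on a real parameter η in an interval H, with ∂_η M(η) ≥ b·I for some b > 0. Then for all a > 0, the Lebesgue measure of {η ∈ H : ‖M(η)^{-1}‖ ≥ a^{-1}} is at most 2·|E|·a/b, where ‖·‖ is the operator norm and ‖M^{-1}‖ := ∞ if M is not invertible. -/
open MeasureTheory
open scoped RealInnerProductSpace

namespace Stmt1Aux

open Module Finset

variable {F : Type*} [NormedAddCommGroup F] [InnerProductSpace ℝ F]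

lemma repr_zero_of_span {ι : Type*} [Fintype ι] (bb : OrthonormalBasis ι ℝ F) (s : Finset ι)
    {v : F} (hv : v ∈ Submodule.span ℝ (bb '' ↑s)) {i : ι} (hi : i ∉ s) :
    bb.repr v i = 0 := by
  rw [bb.repr_apply_apply]
  have hle : Submodule.span ℝ (bb '' ↑s) ≤
      LinearMap.ker ((innerSL ℝ (bb i)).toLinearMap) := by
    rw [Submodule.span_le]
    rintro x ⟨j, hj, rfl⟩
    have hij : i ≠ j := fun h => hi (h ▸ hj)
    simpa [LinearMap.mem_ker] using bb.orthonormal.2 hij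
  simpa [LinearMap.mem_ker] using hle hv

lemma norm_sq_repr {ι : Type*} [Fintype ι] (bb : OrthonormalBasis ι ℝ F) (v : F) :
    ‖v‖ ^ 2 = ∑ i, (bb.repr v i) ^ 2 := by
  have h1 : ⟪v, v⟫ = ⟪bb.repr v, bb.repr v⟫ := (bb.repr.inner_map_map v v).symm
  rw [← real_inner_self_eq_norm_sq, h1]
  simp only [PiLp.inner_apply, RCLike.inner_apply, conj_trivial]
  exact Finset.sum_congr rfl fun i _ => (sq _).symm

variable {E : Type*} [Fintype E] [DecidableEq E]

local notation "𝓔" => EuclideanSpace ℝ E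

lemma inner_apply_repr {T : 𝓔 →ₗ[ℝ] 𝓔} (hT : T.IsSymmetric) (v : 𝓔) :
    ⟪v, T v⟫ = ∑ i, hT.eigenvalues finrank_euclideanSpace i *
      ((hT.eigenvectorBasis finrank_euclideanSpace).repr v i) ^ 2 := by
  set bb := hT.eigenvectorBasis finrank_euclideanSpace
  have h1 : ⟪v, T v⟫ = ⟪bb.repr v, bb.repr (T v)⟫ := (bb.repr.inner_map_map v (T v)).symm
  rw [h1]
  simp only [PiLp.inner_apply, RCLike.inner_apply, conj_trivial]
  refine Finset.sum_congr rfl fun i _ => ?_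
  rw [hT.eigenvectorBasis_apply_self_apply finrank_euclideanSpace v i]
  simp [RCLike.ofReal_real_eq_id]
  ring

lemma norm_apply_sq_repr {T : 𝓔 →ₗ[ℝ] 𝓔} (hT : T.IsSymmetric) (v : 𝓔) :
    ‖T v‖ ^ 2 = ∑ i, (hT.eigenvalues finrank_euclideanSpace i) ^ 2 *
      ((hT.eigenvectorBasis finrank_euclideanSpace).repr v i) ^ 2 := by
  set bb := hT.eigenvectorBasis finrank_euclideanSpace
  rw [norm_sq_repr bb (T v)]
  refine Finset.sum_congr rfl fun i _ => ?_
  rw [hT.eigenvectorBasis_apply_self_apply finrank_euclideanSpace v i]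
  simp [RCLike.ofReal_real_eq_id]
  ring

open scoped Classical in
/-- Counting function: number of eigenvalues `≤ t`. -/
noncomputable def cnt (T : 𝓔 →ₗ[ℝ] 𝓔) (t : ℝ) : ℕ :=
  if h : T.IsSymmetric then
    (Finset.univ.filter fun i : Fin (Fintype.card E) =>
      h.eigenvalues finrank_euclideanSpace i ≤ t).card
  else 0

lemma cnt_eq {T : 𝓔 →ₗ[ℝ] 𝓔} (hT : T.IsSymmetric) (t : ℝ) :
    cnt T t = (Finset.univ.filter fun i : Fin (Fintype.card E) =>
      hT.eigenvalues finrank_euclideanSpace i ≤ t).card := by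
  rw [cnt, dif_pos hT]

lemma cnt_le_card (T : 𝓔 →ₗ[ℝ] 𝓔) (t : ℝ) : cnt T t ≤ Fintype.card E := by
  rw [cnt]
  split
  · exact (Finset.card_filter_le _ _).trans (by simp)
  · exact Nat.zero_le _


lemma exists_repr_ne {ι : Type*} [Fintype ι] (bb : OrthonormalBasis ι ℝ F) {v : F}
    (hv : v ≠ 0) : ∃ i, bb.repr v i ≠ 0 := by
  by_contra hc
  push_neg at hc
  apply hv
  have h0 : bb.repr v = 0 := by
    ext i
    exact hc i
  simpa using (map_eq_zero_iff bb.repr bb.repr.injective).1 h0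

lemma finrank_span_orthonormal {ι : Type*} [Fintype ι] (bb : OrthonormalBasis ι ℝ F)
    (s : Finset ι) :
    Module.finrank ℝ (Submodule.span ℝ (bb '' ↑s)) = s.card := by
  classical
  have hinj : Function.Injective bb := bb.orthonormal.linearIndependent.injective
  have hli : LinearIndependent ℝ ((↑) : (↑(s.image bb) : Set F) → F) := by
    refine LinearIndepOn.mono ((linearIndepOn_id_range_iff hinj).2 bb.orthonormal.linearIndependent) ?_
    rw [Finset.coe_image]
    exact Set.image_subset_range _ _
  rw [← Finset.coe_image, finrank_span_finset_eq_card hli,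
    Finset.card_image_of_injective s hinj]

/-- Weyl-type monotonicity of the eigenvalue counting function. -/
lemma cnt_mono {T S : 𝓔 →ₗ[ℝ] 𝓔} (hT : T.IsSymmetric) (hS : S.IsSymmetric) (c t : ℝ)
    (h : ∀ v : 𝓔, ⟪v, T v⟫ + c * ‖v‖ ^ 2 ≤ ⟪v, S v⟫) :
    cnt S t ≤ cnt T (t - c) := by
  rw [cnt_eq hS, cnt_eq hT]
  set μS := hS.eigenvalues finrank_euclideanSpace with hμS
  set μT := hT.eigenvalues finrank_euclideanSpace with hμT
  set bS := hS.eigenvectorBasis finrank_euclideanSpace with hbS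
  set bT := hT.eigenvectorBasis finrank_euclideanSpace with hbT
  set s : Finset (Fin (Fintype.card E)) := Finset.univ.filter (fun i => μS i ≤ t) with hsdef
  set u : Finset (Fin (Fintype.card E)) := Finset.univ.filter (fun i => t - c < μT i) with hudef
  set V : Submodule ℝ 𝓔 := Submodule.span ℝ (bS '' ↑s) with hVdef
  set W : Submodule ℝ 𝓔 := Submodule.span ℝ (bT '' ↑u) with hWdef
  have hVW : V ⊓ W = ⊥ := by
    rw [Submodule.eq_bot_iff]
    rintro v ⟨hv1, hv2⟩
    by_contra hv0
    have hvpos : 0 < ‖v‖ ^ 2 := by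
      have := norm_pos_iff.2 hv0
      positivity
    have h1 : ⟪v, S v⟫ ≤ t * ‖v‖ ^ 2 := by
      rw [inner_apply_repr hS v, norm_sq_repr bS v, Finset.mul_sum]
      refine Finset.sum_le_sum fun i _ => ?_
      by_cases hi : i ∈ s
      · have hit : μS i ≤ t := (Finset.mem_filter.1 hi).2
        have hnn := sq_nonneg (bS.repr v i)
        nlinarith
      · rw [repr_zero_of_span bS s hv1 hi]
        simp
    have h2 : (t - c) * ‖v‖ ^ 2 < ⟪v, T v⟫ := by
      obtain ⟨i₀, hi₀⟩ := exists_repr_ne bT hv0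
      have hi₀u : i₀ ∈ u := by
        by_contra hiu
        exact hi₀ (repr_zero_of_span bT u hv2 hiu)
      rw [inner_apply_repr hT v, norm_sq_repr bT v, Finset.mul_sum]
      refine Finset.sum_lt_sum (fun i _ => ?_) ⟨i₀, Finset.mem_univ i₀, ?_⟩
      · by_cases hi : i ∈ u
        · have hit := (Finset.mem_filter.1 hi).2
          nlinarith [sq_nonneg (bT.repr v i)]
        · rw [repr_zero_of_span bT u hv2 hi]
          simp
      · have hii : t - c < μT i₀ := (Finset.mem_filter.1 hi₀u).2
        have hp : 0 < (bT.repr v i₀) ^ 2 :=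
          lt_of_le_of_ne (sq_nonneg _) (Ne.symm (pow_ne_zero 2 hi₀))
        exact mul_lt_mul_of_pos_right hii hp
    have := h v
    linarith
  have hVdim : Module.finrank ℝ V = s.card := finrank_span_orthonormal bS s
  have hWdim : Module.finrank ℝ W = u.card := finrank_span_orthonormal bT u
  have hsum := Submodule.finrank_sup_add_finrank_inf_eq V W
  rw [hVW, finrank_bot, add_zero, hVdim, hWdim] at hsum
  have hsup : Module.finrank ℝ ↥(V ⊔ W) ≤ Fintype.card E := by
    have := Submodule.finrank_le (V ⊔ W)
    simpa [finrank_euclideanSpace] using this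
  have hcompl := Finset.card_filter_add_card_filter_not
    (s := (Finset.univ : Finset (Fin (Fintype.card E)))) (p := fun i => t - c < μT i)
  have heq : (Finset.univ.filter fun i => ¬ (t - c < μT i)) =
      (Finset.univ.filter fun i => μT i ≤ t - c) :=
    Finset.filter_congr fun i _ => by simp [not_lt]
  rw [heq, ← hudef, Finset.card_univ, Fintype.card_fin] at hcompl
  omega

/-- A nonzero almost-kernel vector gives an eigenvalue of small modulus. -/
lemma exists_abs_eigen_le {T : 𝓔 →ₗ[ℝ] 𝓔} (hT : T.IsSymmetric) {a : ℝ} {v : 𝓔}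
    (hv : v ≠ 0) (h : ‖T v‖ ≤ a * ‖v‖) :
    ∃ i, |hT.eigenvalues finrank_euclideanSpace i| ≤ a := by
  classical
  by_contra hc
  push_neg at hc
  set μ := hT.eigenvalues finrank_euclideanSpace with hμ
  set bb := hT.eigenvectorBasis finrank_euclideanSpace with hbb
  have hv' : 0 < ‖v‖ := norm_pos_iff.2 hv
  have ha : 0 ≤ a := by nlinarith [norm_nonneg (T v)]
  have hsq : ‖T v‖ ^ 2 ≤ a ^ 2 * ‖v‖ ^ 2 := by nlinarith [norm_nonneg (T v)]
  rw [norm_apply_sq_repr hT v, norm_sq_repr bb v, Finset.mul_sum] at hsq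
  obtain ⟨i₀, hi₀⟩ := exists_repr_ne bb hv
  have hstrict : ∑ i, a ^ 2 * (bb.repr v i) ^ 2 < ∑ i, (μ i) ^ 2 * (bb.repr v i) ^ 2 := by
    have key : ∀ i, a ^ 2 < (μ i) ^ 2 := fun i => by
      nlinarith [hc i, abs_nonneg (μ i), sq_abs (μ i)]
    refine Finset.sum_lt_sum (fun i _ => ?_) ⟨i₀, Finset.mem_univ i₀, ?_⟩
    · exact mul_le_mul_of_nonneg_right (le_of_lt (key i)) (sq_nonneg _)
    · exact mul_lt_mul_of_pos_right (key i₀)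
        (lt_of_le_of_ne (sq_nonneg _) (Ne.symm (pow_ne_zero 2 hi₀)))
  linarith

/-- a set of small diameter has small measure -/
lemma volume_le_of_diam {s : Set ℝ} {d : ℝ} (hd : 0 ≤ d)
    (h : ∀ x ∈ s, ∀ y ∈ s, y - x ≤ d) : volume s ≤ ENNReal.ofReal d := by
  rcases s.eq_empty_or_nonempty with rfl | ⟨x0, hx0⟩
  · simp
  have hbdd : BddBelow s := ⟨x0 - d, fun y hy => by linarith [h y hy x0 hx0]⟩
  have hsub : s ⊆ Set.Icc (sInf s) (sInf s + d) := by
    intro y hy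
    refine ⟨csInf_le hbdd hy, ?_⟩
    have : y - d ≤ sInf s := le_csInf ⟨x0, hx0⟩ fun x hx => by linarith [h x hx y hy]
    linarith
  calc volume s ≤ volume (Set.Icc (sInf s) (sInf s + d)) := measure_mono hsub
    _ = ENNReal.ofReal d := by rw [Real.volume_Icc]; ring_nf

end Stmt1Aux

open Stmt1Aux

/-- If a `C¹` family of self-adjoint matrices satisfies `∂_η M(η) ≥ b·I`, then the set of
parameters `η ∈ H` where `M(η)` has an "eigenvalue of modulus at most `a`"
(equivalently `‖M(η)⁻¹‖ ≥ a⁻¹`, with the convention `‖M⁻¹‖ = ∞` if `M` is not invertible)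
has Lebesgue measure at most `2·|E|·a/b`. -/
theorem stmt_1 {E : Type*} [Fintype E] [DecidableEq E]
    (H : Set ℝ) (hH : H.OrdConnected)
    (M M' : ℝ → Matrix E E ℝ)
    (hsym : ∀ η ∈ H, (M η).IsSymm)
    (hderiv : ∀ η ∈ H, ∀ i j, HasDerivWithinAt (fun s => M s i j) (M' η i j) H η)
    (b : ℝ) (hb : 0 < b)
    (hmono : ∀ η ∈ H, ∀ v : EuclideanSpace ℝ E,
      b * ‖v‖ ^ 2 ≤ ⟪v, Matrix.toEuclideanLin (M' η) v⟫)
    (a : ℝ) (ha : 0 < a) :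
    volume {η ∈ H | ∃ v : EuclideanSpace ℝ E, v ≠ 0 ∧
        ‖Matrix.toEuclideanLin (M η) v‖ ≤ a * ‖v‖}
      ≤ ENNReal.ofReal (2 * (Fintype.card E) * a / b) := by
  classical
  set n := Fintype.card E with hn
  have hsymm : ∀ η ∈ H, (Matrix.toEuclideanLin (M η)).IsSymmetric := by
    intro η hη
    refine Matrix.isHermitian_iff_isSymmetric.1 ?_
    rw [Matrix.IsHermitian, Matrix.conjTranspose_eq_transpose_of_trivial]
    exact hsym η hη
  set Sset := {η ∈ H | ∃ v : EuclideanSpace ℝ E, v ≠ 0 ∧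
      ‖Matrix.toEuclideanLin (M η) v‖ ≤ a * ‖v‖} with hSdef
  set N : ℝ → ℕ := fun η => cnt (Matrix.toEuclideanLin (M η)) a with hNdef
  have hconv : Convex ℝ H := hH.convex
  have hqd : ∀ v : EuclideanSpace ℝ E, ∀ η ∈ H, HasDerivWithinAt
      (fun s => ⟪v, Matrix.toEuclideanLin (M s) v⟫)
      (⟪v, Matrix.toEuclideanLin (M' η) v⟫) H η := by
    intro v η hη
    have hrw : ∀ A : Matrix E E ℝ,
        ⟪v, Matrix.toEuclideanLin A v⟫ = ∑ i, v i * ∑ j, A i j * v j := by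
      intro A
      simp [Matrix.toEuclideanLin_apply, PiLp.inner_apply, RCLike.inner_apply,
        conj_trivial, Matrix.mulVec, dotProduct, mul_comm]
    simp only [hrw]
    exact HasDerivWithinAt.fun_sum fun i _ =>
      HasDerivWithinAt.const_mul (v i)
        (HasDerivWithinAt.fun_sum fun j _ => (hderiv η hη i j).mul_const (v j))
  have hq : ∀ η₁ ∈ H, ∀ η₂ ∈ H, η₁ ≤ η₂ → ∀ v : EuclideanSpace ℝ E,
      ⟪v, Matrix.toEuclideanLin (M η₁) v⟫ + b * (η₂ - η₁) * ‖v‖ ^ 2 ≤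
        ⟪v, Matrix.toEuclideanLin (M η₂) v⟫ := by
    intro η₁ h1 η₂ h2 h12 v
    have hcont : ContinuousOn (fun s => ⟪v, Matrix.toEuclideanLin (M s) v⟫) H :=
      fun x hx => (hqd v x hx).continuousWithinAt
    have hdiff : DifferentiableOn ℝ (fun s => ⟪v, Matrix.toEuclideanLin (M s) v⟫)
        (interior H) := by
      intro x hx
      exact (((hqd v x (interior_subset hx)).hasDerivAt
        (mem_interior_iff_mem_nhds.1 hx)).differentiableAt).differentiableWithinAt
    have hbound : ∀ x ∈ interior H,
        b * ‖v‖ ^ 2 ≤ deriv (fun s => ⟪v, Matrix.toEuclideanLin (M s) v⟫) x := by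
      intro x hx
      have hd := (hqd v x (interior_subset hx)).hasDerivAt (mem_interior_iff_mem_nhds.1 hx)
      rw [hd.deriv]
      exact hmono x (interior_subset hx) v
    have key := hconv.mul_sub_le_image_sub_of_le_deriv hcont hdiff hbound η₁ h1 η₂ h2 h12
    have hring : b * (η₂ - η₁) * ‖v‖ ^ 2 = b * ‖v‖ ^ 2 * (η₂ - η₁) := by ring
    linarith [key]
  have hN1 : ∀ η ∈ Sset, 1 ≤ N η ∧ N η ≤ n := by
    intro η hη
    obtain ⟨hηH, v, hv0, hva⟩ := hη
    have hTs := hsymm η hηH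
    obtain ⟨i₀, hi₀⟩ := exists_abs_eigen_le hTs hv0 hva
    constructor
    · have : N η = (Finset.univ.filter fun i =>
          hTs.eigenvalues finrank_euclideanSpace i ≤ a).card := cnt_eq hTs a
      rw [this]
      exact Finset.card_pos.2 ⟨i₀, Finset.mem_filter.2 ⟨Finset.mem_univ i₀, (abs_le.1 hi₀).2⟩⟩
    · exact cnt_le_card _ a
  have hdrop : ∀ η₁ ∈ Sset, ∀ η₂ ∈ Sset, η₁ ≤ η₂ → 2 * a / b < η₂ - η₁ →
      N η₂ < N η₁ := by
    intro η₁ hs1 η₂ hs2 h12 hgap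
    obtain ⟨hη1, v1, hv1, hva1⟩ := hs1
    obtain ⟨hη2, -⟩ := hs2
    have hT1 := hsymm η₁ hη1
    have hT2 := hsymm η₂ hη2
    have hc : cnt (Matrix.toEuclideanLin (M η₂)) a ≤
        cnt (Matrix.toEuclideanLin (M η₁)) (a - b * (η₂ - η₁)) :=
      cnt_mono hT1 hT2 (b * (η₂ - η₁)) a (fun v => hq η₁ hη1 η₂ hη2 h12 v)
    rw [cnt_eq hT1] at hc
    have habd : a - b * (η₂ - η₁) < -a := by
      have h2a : 2 * a < b * (η₂ - η₁) := by
        rw [div_lt_iff₀ hb] at hgap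
        nlinarith
      linarith
    obtain ⟨i₀, hi₀⟩ := exists_abs_eigen_le hT1 hv1 hva1
    set μ := hT1.eigenvalues finrank_euclideanSpace with hμd
    have hsub : (Finset.univ.filter fun i => μ i ≤ a - b * (η₂ - η₁)) ⊆
        (Finset.univ.filter fun i => μ i ≤ a).erase i₀ := by
      intro i hi
      have hμi := (Finset.mem_filter.1 hi).2
      rw [Finset.mem_erase]
      constructor
      · rintro rfl
        have := (abs_le.1 hi₀).1
        linarith
      · exact Finset.mem_filter.2 ⟨Finset.mem_univ i, by linarith⟩
    have hi₀mem : i₀ ∈ Finset.univ.filter fun i => μ i ≤ a :=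
      Finset.mem_filter.2 ⟨Finset.mem_univ i₀, (abs_le.1 hi₀).2⟩
    have hcard := Finset.card_le_card hsub
    rw [Finset.card_erase_of_mem hi₀mem] at hcard
    have hpos : 0 < (Finset.univ.filter fun i => μ i ≤ a).card :=
      Finset.card_pos.2 ⟨i₀, hi₀mem⟩
    have e1 : N η₁ = (Finset.univ.filter fun i => μ i ≤ a).card := cnt_eq hT1 a
    have e2 : N η₂ = cnt (Matrix.toEuclideanLin (M η₂)) a := rfl
    omega
  have hcover : Sset ⊆ ⋃ j ∈ Finset.Icc 1 n, {η ∈ Sset | N η = j} := by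
    intro η hη
    have h1 := hN1 η hη
    simp only [Set.mem_iUnion, Set.mem_setOf_eq]
    exact ⟨N η, Finset.mem_Icc.2 ⟨h1.1, h1.2⟩, hη, rfl⟩
  have hvol : ∀ j, volume {η ∈ Sset | N η = j} ≤ ENNReal.ofReal (2 * a / b) := by
    intro j
    refine volume_le_of_diam (by positivity) ?_
    intro x hx y hy
    by_contra hgt
    push_neg at hgt
    have h0 : 0 < 2 * a / b := by positivity
    have hxy : x ≤ y := by linarith
    have hlt := hdrop x hx.1 y hy.1 hxy hgt
    rw [hx.2, hy.2] at hlt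
    exact lt_irrefl j hlt
  calc volume Sset ≤ volume (⋃ j ∈ Finset.Icc 1 n, {η ∈ Sset | N η = j}) :=
        measure_mono hcover
    _ ≤ ∑ j ∈ Finset.Icc 1 n, volume {η ∈ Sset | N η = j} :=
        measure_biUnion_finset_le _ _
    _ ≤ ∑ j ∈ Finset.Icc 1 n, ENNReal.ofReal (2 * a / b) :=
        Finset.sum_le_sum fun j _ => hvol j
    _ = (n : ENNReal) * ENNReal.ofReal (2 * a / b) := by
        rw [Finset.sum_const, Nat.card_Icc]
        simp [nsmul_eq_mul]
    _ = ENNReal.ofReal (2 * n * a / b) := by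
        rw [← ENNReal.ofReal_natCast n, ← ENNReal.ofReal_mul (by positivity)]
        congr 1
        ring
end

section
/- Under the same hypotheses (∂_η M(η) ≥ b·I for a family of self-adjoint matrices over a finite set E), the set {η ∈ H : ‖M(η)^{-1}‖ ≥ a^{-1}} is contained in a union of at most |E| intervals each of measure at most 2a/b. -/
open MeasureTheory
open scoped RealInnerProductSpace

section stmt2aux
variable {F : Type*} [NormedAddCommGroup F] [InnerProductSpace ℝ F] {n : ℕ}

lemma stmt2_norm_sq_expand (e : OrthonormalBasis (Fin n) ℝ F) (v : F) :
    ‖v‖ ^ 2 = ∑ i, (⟪e i, v⟫) ^ 2 := by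
  rw [← real_inner_self_eq_norm_sq, ← e.repr.inner_map_map v v, PiLp.inner_apply]
  simp [e.repr_apply_apply, RCLike.inner_apply, sq]

lemma stmt2_repr_map (e : OrthonormalBasis (Fin n) ℝ F) (T : F →ₗ[ℝ] F) (hT : T.IsSymmetric)
    (lam : Fin n → ℝ) (h : ∀ i, T (e i) = lam i • e i) (v : F) (i : Fin n) :
    ⟪e i, T v⟫ = lam i * ⟪e i, v⟫ := by
  rw [← hT (e i) v, h i, real_inner_smul_left]

lemma stmt2_quad_expand (e : OrthonormalBasis (Fin n) ℝ F) (T : F →ₗ[ℝ] F) (hT : T.IsSymmetric)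
    (lam : Fin n → ℝ) (h : ∀ i, T (e i) = lam i • e i) (v : F) :
    ⟪v, T v⟫ = ∑ i, lam i * (⟪e i, v⟫) ^ 2 := by
  rw [← e.repr.inner_map_map v (T v), PiLp.inner_apply]
  simp only [e.repr_apply_apply, RCLike.inner_apply, starRingEnd_apply, star_trivial]
  refine Finset.sum_congr rfl fun i _ => ?_
  rw [stmt2_repr_map e T hT lam h v i]; ring

lemma stmt2_norm_map_expand (e : OrthonormalBasis (Fin n) ℝ F) (T : F →ₗ[ℝ] F)
    (hT : T.IsSymmetric)
    (lam : Fin n → ℝ) (h : ∀ i, T (e i) = lam i • e i) (v : F) :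
    ‖T v‖ ^ 2 = ∑ i, (lam i) ^ 2 * (⟪e i, v⟫) ^ 2 := by
  rw [stmt2_norm_sq_expand e (T v)]
  refine Finset.sum_congr rfl fun i _ => ?_
  rw [stmt2_repr_map e T hT lam h v i]; ring

lemma stmt2_sorted_eigen [FiniteDimensional ℝ F] (hn : Module.finrank ℝ F = n)
    (T : F →ₗ[ℝ] F) (hT : T.IsSymmetric) :
    ∃ lam : Fin n → ℝ, Monotone lam ∧
      ∃ e : OrthonormalBasis (Fin n) ℝ F, ∀ i, T (e i) = lam i • e i := by
  set e₀ := hT.eigenvectorBasis hn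
  set l₀ := hT.eigenvalues hn
  set σ := Tuple.sort l₀
  refine ⟨l₀ ∘ σ, Tuple.monotone_sort l₀, e₀.reindex σ.symm, fun i => ?_⟩
  have h := hT.apply_eigenvectorBasis hn (σ i)
  simp only [OrthonormalBasis.reindex_apply, Equiv.symm_symm, Function.comp_apply]
  exact_mod_cast h

lemma stmt2_inner_eq_zero_of_mem_span (e : OrthonormalBasis (Fin n) ℝ F) {m : ℕ} (hm : m ≤ n)
    {v : F} (hv : v ∈ Submodule.span ℝ (Set.range (⇑e ∘ Fin.castLE hm)))
    (i : Fin n) (hi : m ≤ (i : ℕ)) : ⟪e i, v⟫ = 0 := by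
  induction hv using Submodule.span_induction with
  | mem x hx =>
      obtain ⟨j, rfl⟩ := hx
      refine e.orthonormal.2 ?_
      intro h
      rw [h] at hi
      simp [Fin.castLE] at hi
      omega
  | zero => simp
  | add x y _ _ hx hy => rw [inner_add_right, hx, hy, add_zero]
  | smul c x _ hx => rw [real_inner_smul_right, hx, mul_zero]

lemma stmt2_eigen_compare [FiniteDimensional ℝ F] (hn : Module.finrank ℝ F = n)
    (T₁ T₂ : F →ₗ[ℝ] F) (h₁ : T₁.IsSymmetric) (h₂ : T₂.IsSymmetric)
    (e f : OrthonormalBasis (Fin n) ℝ F) (lam mu : Fin n → ℝ)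
    (hlam : Monotone lam) (hmu : Monotone mu)
    (he : ∀ i, T₁ (e i) = lam i • e i) (hf : ∀ i, T₂ (f i) = mu i • f i)
    (c : ℝ) (hc : ∀ v : F, ⟪v, T₁ v⟫ + c * ‖v‖ ^ 2 ≤ ⟪v, T₂ v⟫)
    (k : Fin n) : lam k + c ≤ mu k := by
  have hk1 : (k : ℕ) + 1 ≤ n := k.isLt
  have hk0 : (k : ℕ) ≤ n := le_of_lt k.isLt
  set V : Submodule ℝ F := Submodule.span ℝ (Set.range (⇑f ∘ Fin.castLE hk1)) with hV
  set U : Submodule ℝ F := Submodule.span ℝ (Set.range (⇑e ∘ Fin.castLE hk0)) with hU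
  have hdimV : Module.finrank ℝ V = (k : ℕ) + 1 := by
    rw [hV, finrank_span_eq_card
      ((f.orthonormal.comp _ (Fin.castLE_injective hk1)).linearIndependent)]
    simp
  have hdimU : Module.finrank ℝ U = (k : ℕ) := by
    rw [hU, finrank_span_eq_card
      ((e.orthonormal.comp _ (Fin.castLE_injective hk0)).linearIndependent)]
    simp
  have hdimW : Module.finrank ℝ (Uᗮ : Submodule ℝ F) = n - (k : ℕ) := by
    have := Submodule.finrank_add_finrank_orthogonal (K := U)
    omega
  have hne : V ⊓ Uᗮ ≠ ⊥ := by
    intro hbot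
    have hsum := Submodule.finrank_sup_add_finrank_inf_eq V Uᗮ
    have hle : Module.finrank ℝ ((V ⊔ Uᗮ : Submodule ℝ F) : Submodule ℝ F) ≤ n :=
      hn ▸ Submodule.finrank_le _
    rw [hbot] at hsum
    simp [finrank_bot] at hsum
    omega
  obtain ⟨v, hvmem, hv0⟩ := Submodule.exists_mem_ne_zero_of_ne_bot hne
  have hvV : v ∈ V := hvmem.1
  have hvW : v ∈ Uᗮ := hvmem.2
  have hfcoef : ∀ i : Fin n, (k : ℕ) < (i : ℕ) → ⟪f i, v⟫ = 0 := fun i hi =>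
    stmt2_inner_eq_zero_of_mem_span f hk1 hvV i hi
  have hecoef : ∀ i : Fin n, (i : ℕ) < (k : ℕ) → ⟪e i, v⟫ = 0 := by
    intro i hi
    have hmem : e i ∈ U := by
      apply Submodule.subset_span
      exact ⟨⟨(i : ℕ), hi⟩, by simp [Fin.castLE]⟩
    exact (Submodule.mem_orthogonal U v).mp hvW (e i) hmem
  have hub : ⟪v, T₂ v⟫ ≤ mu k * ‖v‖ ^ 2 := by
    rw [stmt2_quad_expand f T₂ h₂ mu hf v, stmt2_norm_sq_expand f v, Finset.mul_sum]
    refine Finset.sum_le_sum fun i _ => ?_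
    rcases le_or_gt (i : ℕ) (k : ℕ) with h | h
    · have : mu i ≤ mu k := hmu (by exact_mod_cast h)
      nlinarith [sq_nonneg (⟪f i, v⟫)]
    · rw [hfcoef i h]; simp
  have hlb : lam k * ‖v‖ ^ 2 ≤ ⟪v, T₁ v⟫ := by
    rw [stmt2_quad_expand e T₁ h₁ lam he v, stmt2_norm_sq_expand e v, Finset.mul_sum]
    refine Finset.sum_le_sum fun i _ => ?_
    rcases le_or_gt (k : ℕ) (i : ℕ) with h | h
    · have : lam k ≤ lam i := hlam (by exact_mod_cast h)
      nlinarith [sq_nonneg (⟪e i, v⟫)]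
    · rw [hecoef i h]; simp
  have hvn : 0 < ‖v‖ := norm_pos_iff.mpr hv0
  have hvpos : 0 < ‖v‖ ^ 2 := by positivity
  nlinarith [hc v]

lemma stmt2_exists_small_eigen (e : OrthonormalBasis (Fin n) ℝ F) (T : F →ₗ[ℝ] F)
    (hT : T.IsSymmetric) (lam : Fin n → ℝ) (h : ∀ i, T (e i) = lam i • e i)
    {a : ℝ} (ha : 0 ≤ a) {v : F} (hv0 : v ≠ 0) (hv : ‖T v‖ ≤ a * ‖v‖) :
    ∃ k, |lam k| ≤ a := by
  by_contra hcon
  push_neg at hcon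
  have hsq : ∀ k, a ^ 2 < (lam k) ^ 2 := fun k => by
    have := hcon k
    nlinarith [abs_nonneg (lam k), sq_abs (lam k), le_abs_self (lam k), neg_abs_le (lam k)]
  have hex : ∃ i, (⟪e i, v⟫) ^ 2 ≠ 0 := by
    by_contra hall
    push_neg at hall
    have h1 : ‖v‖ ^ 2 = 0 := by
      rw [stmt2_norm_sq_expand e v]; exact Finset.sum_eq_zero fun i _ => hall i
    have h2 : ‖v‖ = 0 := by nlinarith [norm_nonneg v]
    exact hv0 (norm_eq_zero.mp h2)
  obtain ⟨i₀, hi₀⟩ := hex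
  have hlt : a ^ 2 * ‖v‖ ^ 2 < ‖T v‖ ^ 2 := by
    rw [stmt2_norm_map_expand e T hT lam h v, stmt2_norm_sq_expand e v, Finset.mul_sum]
    refine Finset.sum_lt_sum (fun i _ => ?_) ⟨i₀, Finset.mem_univ i₀, ?_⟩
    · nlinarith [sq_nonneg (⟪e i, v⟫), (hsq i).le]
    · have h1 : 0 < (⟪e i₀, v⟫) ^ 2 := lt_of_le_of_ne (sq_nonneg _) (Ne.symm hi₀)
      nlinarith [hsq i₀]
  nlinarith [norm_nonneg (T v), norm_nonneg v, mul_nonneg ha (norm_nonneg v)]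

end stmt2aux

lemma stmt2_inner_toEuclideanLin {E : Type*} [Fintype E] [DecidableEq E]
    (A : Matrix E E ℝ) (v : EuclideanSpace ℝ E) :
    ⟪v, Matrix.toEuclideanLin A v⟫ = ∑ i, ∑ j, v i * (A i j * v j) := by
  rw [PiLp.inner_apply]
  simp only [RCLike.inner_apply, starRingEnd_apply, star_trivial,
    Matrix.toEuclideanLin_apply]
  refine Finset.sum_congr rfl fun i _ => ?_
  simp [Matrix.mulVec, dotProduct, Finset.sum_mul]
  exact Finset.sum_congr rfl fun _ _ => by ring

/-- Under `∂_η M(η) ≥ b·I`, the set of parameters where `M(η)` has an eigenvalue of modulus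
at most `a` is contained in a union of at most `|E|` intervals, each of measure at most
`2a/b`. -/
theorem stmt_2 {E : Type*} [Fintype E] [DecidableEq E]
    (H : Set ℝ) (hH : H.OrdConnected)
    (M M' : ℝ → Matrix E E ℝ)
    (hsym : ∀ η ∈ H, (M η).IsSymm)
    (hderiv : ∀ η ∈ H, ∀ i j, HasDerivWithinAt (fun s => M s i j) (M' η i j) H η)
    (b : ℝ) (hb : 0 < b)
    (hmono : ∀ η ∈ H, ∀ v : EuclideanSpace ℝ E,
      b * ‖v‖ ^ 2 ≤ ⟪v, Matrix.toEuclideanLin (M' η) v⟫)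
    (a : ℝ) (ha : 0 < a) :
    ∃ I : Fin (Fintype.card E) → Set ℝ,
      (∀ q, (I q).OrdConnected ∧ volume (I q) ≤ ENNReal.ofReal (2 * a / b)) ∧
      {η ∈ H | ∃ v : EuclideanSpace ℝ E, v ≠ 0 ∧
          ‖Matrix.toEuclideanLin (M η) v‖ ≤ a * ‖v‖} ⊆ ⋃ q, I q := by
  classical
  set n := Fintype.card E with hn
  have hfr : Module.finrank ℝ (EuclideanSpace ℝ E) = n := by
    rw [finrank_euclideanSpace]
  have hsymm : ∀ η ∈ H, (Matrix.toEuclideanLin (M η)).IsSymmetric := by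
    intro η hη
    rw [← Matrix.isHermitian_iff_isSymmetric]
    unfold Matrix.IsHermitian
    rw [Matrix.conjTranspose]
    have h := hsym η hη
    ext i j
    simpa [Matrix.IsSymm] using congrFun (congrFun h i) j
  -- quadratic form comparison
  have quad : ∀ η₁ ∈ H, ∀ η₂ ∈ H, η₁ ≤ η₂ → ∀ v : EuclideanSpace ℝ E,
      ⟪v, Matrix.toEuclideanLin (M η₁) v⟫ + (b * (η₂ - η₁)) * ‖v‖ ^ 2
        ≤ ⟪v, Matrix.toEuclideanLin (M η₂) v⟫ := by
    intro η₁ h₁ η₂ h₂ hle v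
    set c : ℝ := b * ‖v‖ ^ 2 with hc
    set g : ℝ → ℝ := fun s => (∑ i, ∑ j, v i * (M s i j * v j)) - c * s with hg
    have hgd : ∀ s ∈ H, HasDerivWithinAt g
        ((∑ i, ∑ j, v i * (M' s i j * v j)) - c) H s := by
      intro s hs
      refine HasDerivWithinAt.sub ?_ ?_
      · refine HasDerivWithinAt.fun_sum fun i _ => HasDerivWithinAt.fun_sum fun j _ => ?_
        simpa [mul_assoc] using ((hderiv s hs i j).const_mul (v i)).mul_const (v j)
      · simpa using (hasDerivWithinAt_id s H).const_mul c
    have hIcc : Set.Icc η₁ η₂ ⊆ H := hH.out h₁ h₂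
    have hmonoOn : MonotoneOn g (Set.Icc η₁ η₂) := by
      refine monotoneOn_of_hasDerivWithinAt_nonneg
        (f' := fun s => (∑ i, ∑ j, v i * (M' s i j * v j)) - c) (convex_Icc η₁ η₂)
        (fun s hs => ((hgd s (hIcc hs)).continuousWithinAt).mono hIcc) ?_ ?_
      · intro s hs
        exact ((hgd s (hIcc (interior_subset hs))).mono (interior_subset.trans hIcc))
      · intro s hs
        have hsH : s ∈ H := hIcc (interior_subset hs)
        have h2 : c ≤ ∑ i, ∑ j, v i * (M' s i j * v j) := by
          rw [hc, ← stmt2_inner_toEuclideanLin]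
          exact hmono s hsH v
        simp only []
        linarith
    have hg12 : g η₁ ≤ g η₂ :=
      hmonoOn (Set.left_mem_Icc.mpr hle) (Set.right_mem_Icc.mpr hle) hle
    rw [stmt2_inner_toEuclideanLin, stmt2_inner_toEuclideanLin]
    simp only [hg] at hg12
    nlinarith [hg12]
  -- sorted eigenvalue data
  have exdata : ∀ η ∈ H, ∃ lam : Fin n → ℝ, Monotone lam ∧
      ∃ e : OrthonormalBasis (Fin n) ℝ (EuclideanSpace ℝ E),
        ∀ i, Matrix.toEuclideanLin (M η) (e i) = lam i • e i :=
    fun η hη => stmt2_sorted_eigen hfr _ (hsymm η hη)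
  choose! lam hlmono hex using exdata
  have lamcomp : ∀ η₁ ∈ H, ∀ η₂ ∈ H, η₁ ≤ η₂ → ∀ k,
      lam η₁ k + b * (η₂ - η₁) ≤ lam η₂ k := by
    intro η₁ h₁ η₂ h₂ hle k
    obtain ⟨e, he⟩ := hex η₁ h₁
    obtain ⟨f, hf⟩ := hex η₂ h₂
    exact stmt2_eigen_compare hfr _ _ (hsymm η₁ h₁) (hsymm η₂ h₂) e f _ _
      (hlmono η₁ h₁) (hlmono η₂ h₂) he hf _ (quad η₁ h₁ η₂ h₂ hle) k
  set S : Fin n → Set ℝ := fun k => {η ∈ H | |lam η k| ≤ a} with hSdef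
  have hdiam : ∀ k, ∀ x ∈ S k, ∀ y ∈ S k, x ≤ y → y - x ≤ 2 * a / b := by
    intro k x hx y hy hxy
    have hcmp := lamcomp x hx.1 y hy.1 hxy k
    have hax := hx.2
    have hay := hy.2
    rw [abs_le] at hax hay
    rw [le_div_iff₀ hb]
    nlinarith
  have h2ab : 0 ≤ 2 * a / b := by positivity
  have hbddA : ∀ k, BddAbove (S k) ∧ BddBelow (S k) := by
    intro k
    rcases Set.eq_empty_or_nonempty (S k) with h | ⟨x₀, hx₀⟩
    · rw [h]; exact ⟨bddAbove_empty, bddBelow_empty⟩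
    · constructor
      · refine ⟨x₀ + 2 * a / b, fun y hy => ?_⟩
        rcases le_total y x₀ with h' | h'
        · linarith
        · have := hdiam k x₀ hx₀ y hy h'; linarith
      · refine ⟨x₀ - 2 * a / b, fun y hy => ?_⟩
        rcases le_total x₀ y with h' | h'
        · linarith
        · have := hdiam k y hy x₀ hx₀ h'; linarith
  refine ⟨fun k => if hk : (S k).Nonempty
      then Set.Icc (sInf (S k)) (sSup (S k)) else ∅, fun k => ?_, ?_⟩
  · by_cases hk : (S k).Nonempty
    · simp only [dif_pos hk]
      refine ⟨Set.ordConnected_Icc, ?_⟩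
      have hs : sSup (S k) ≤ sInf (S k) + 2 * a / b := by
        apply csSup_le hk
        intro y hy
        have hinf : y - 2 * a / b ≤ sInf (S k) := by
          apply le_csInf hk
          intro x hx
          rcases le_total x y with h' | h'
          · have := hdiam k x hx y hy h'; linarith
          · linarith
        linarith
      rw [Real.volume_Icc]
      exact ENNReal.ofReal_le_ofReal (by linarith)
    · simp only [dif_neg hk]
      exact ⟨Set.ordConnected_empty, by simp⟩
  · intro η hη
    obtain ⟨hηH, v, hv0, hv⟩ := hη
    obtain ⟨e, he⟩ := hex η hηH
    obtain ⟨k, hk⟩ := stmt2_exists_small_eigen e _ (hsymm η hηH) _ he ha.le hv0 hv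
    have hηS : η ∈ S k := ⟨hηH, hk⟩
    have hne : (S k).Nonempty := ⟨η, hηS⟩
    refine Set.mem_iUnion.mpr ⟨k, ?_⟩
    simp only [dif_pos hne]
    exact ⟨csInf_le (hbddA k).2 hηS, le_csSup (hbddA k).1 hηS⟩
end

section
/- Let {n_k : k = 0,...,L} be a B-chain in Z^ν × Γ (i.e., pairwise distinct with |n_{k+1} − n_k| ≤ B for all k), and suppose each n_k = (l_k, j_k) satisfies the singular-site condition |−(λω_0·l_k + θ)² + (‖j_k+ρ‖² − ‖ρ‖²)² + m| < Θ̃ + 1. Then one of the two θ-independent inequalities | ±λω_0·(l_{k+1}−l_k) + (‖j_{k+1}+ρ‖² ± ‖j_k+ρ‖²) | < 2(√(Θ̃+1+m) + ‖ρ‖²) holds, and consequently | ‖j_{k+1}+ρ‖² − ‖j_k+ρ‖² | < 2(√(Θ̃+1+m) + ‖ρ‖² + B̃) where B̃ ≥ |λω_0·(l_{k+1}−l_k)|. -/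
/-- Along a `B`-chain of singular sites `n_k = (l_k, j_k)`, one of the two θ-independent
inequalities `|±λω₀·(l_{k+1}-l_k) + (‖j_{k+1}+ρ‖² ± ‖j_k+ρ‖²)| < 2(√(Θ̃+1+m) + ‖ρ‖²)`
holds, and consequently
`|‖j_{k+1}+ρ‖² - ‖j_k+ρ‖²| < 2(√(Θ̃+1+m) + ‖ρ‖² + B̃)` where `B̃` bounds
`|λω₀·(l_{k+1}-l_k)|`. -/
theorem stmt_11 (ν r L : ℕ) (l : ℕ → Fin ν → ℤ) (j : ℕ → EuclideanSpace ℝ (Fin r))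
    (lam θ : ℝ) (ω₀ : Fin ν → ℝ) (ρ : EuclideanSpace ℝ (Fin r))
    (m Θt B Bt : ℝ) (hm : 0 ≤ m) (hΘt : 0 < Θt) (hB : 2 ≤ B) (hBt : 0 ≤ Bt)
    (hdist : ∀ k k', k ≤ L → k' ≤ L → k ≠ k' → (l k, j k) ≠ (l k', j k'))
    (hchain : ∀ k, k < L →
      ((Finset.univ.sup fun i => (l (k + 1) i - l k i).natAbs : ℕ) : ℝ) ≤ B)
    (hsing : ∀ k, k ≤ L →
      |-(lam * (∑ i, ω₀ i * (l k i : ℝ)) + θ) ^ 2 +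
          (‖j k + ρ‖ ^ 2 - ‖ρ‖ ^ 2) ^ 2 + m| < Θt + 1)
    (hBt' : ∀ k, k < L →
      |lam * ∑ i, ω₀ i * ((l (k + 1) i - l k i : ℤ) : ℝ)| ≤ Bt) :
    ∀ k, k < L →
      (∃ ε₁ ε₂ : ℝ, (ε₁ = 1 ∨ ε₁ = -1) ∧ (ε₂ = 1 ∨ ε₂ = -1) ∧
        |ε₁ * (lam * ∑ i, ω₀ i * ((l (k + 1) i - l k i : ℤ) : ℝ)) +
            (‖j (k + 1) + ρ‖ ^ 2 + ε₂ * ‖j k + ρ‖ ^ 2)| <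
          2 * (Real.sqrt (Θt + 1 + m) + ‖ρ‖ ^ 2)) ∧
      |‖j (k + 1) + ρ‖ ^ 2 - ‖j k + ρ‖ ^ 2| <
        2 * (Real.sqrt (Θt + 1 + m) + ‖ρ‖ ^ 2 + Bt) := by
  intro k hk
  have hC0 : (0:ℝ) < Θt + 1 + m := by linarith
  set S := Real.sqrt (Θt + 1 + m) with hSdef
  have hS0 : 0 ≤ S := Real.sqrt_nonneg _
  have hSS : S * S = Θt + 1 + m := Real.mul_self_sqrt hC0.le
  have key : ∀ a b : ℝ, |a ^ 2 - b ^ 2| < Θt + 1 + m →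
      ∃ s : ℝ, (s = 1 ∨ s = -1) ∧ |a + s * b| < S := by
    intro a b h
    by_contra hcon
    push_neg at hcon
    have h1 : S ≤ |a + b| := by simpa using hcon 1 (Or.inl rfl)
    have h2 : S ≤ |a - b| := by
      have := hcon (-1) (Or.inr rfl)
      simpa [sub_eq_add_neg] using this
    have e : |a ^ 2 - b ^ 2| = |a + b| * |a - b| := by
      rw [← abs_mul]; congr 1; ring
    nlinarith [abs_nonneg (a + b), abs_nonneg (a - b)]
  have hs : ∀ k', k' ≤ L →
      |(lam * (∑ i, ω₀ i * (l k' i : ℝ)) + θ) ^ 2 - (‖j k' + ρ‖ ^ 2 - ‖ρ‖ ^ 2) ^ 2|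
        < Θt + 1 + m := by
    intro k' hk'
    have h := hsing k' hk'
    rw [abs_lt] at h ⊢
    constructor <;> linarith [h.1, h.2]
  obtain ⟨s₁, hs₁, h1⟩ := key _ _ (hs k (by omega))
  obtain ⟨s₂, hs₂, h2⟩ := key _ _ (hs (k + 1) (by omega))
  have hD : lam * ∑ i, ω₀ i * ((l (k + 1) i - l k i : ℤ) : ℝ)
      = (lam * (∑ i, ω₀ i * ((l (k + 1) i : ℝ))) + θ)
        - (lam * (∑ i, ω₀ i * ((l k i : ℝ))) + θ) := by
    push_cast
    simp only [mul_sub]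
    rw [Finset.sum_sub_distrib]
    ring
  have hBd := hBt' k hk
  rw [abs_le] at hBd
  set D := lam * ∑ i, ω₀ i * ((l (k + 1) i - l k i : ℤ) : ℝ) with hDdef
  set X := lam * (∑ i, ω₀ i * ((l k i : ℝ))) + θ with hXdef
  set X' := lam * (∑ i, ω₀ i * ((l (k + 1) i : ℝ))) + θ with hX'def
  set P := ‖j k + ρ‖ ^ 2 with hPdef
  set P' := ‖j (k + 1) + ρ‖ ^ 2 with hP'def
  set R := ‖ρ‖ ^ 2 with hRdef
  have hR : (0:ℝ) ≤ R := by positivity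
  have hP : (0:ℝ) ≤ P := by positivity
  have hP' : (0:ℝ) ≤ P' := by positivity
  clear_value D X X' P P' R
  have main : |s₂ * D + (P' + (-(s₂ * s₁)) * P)| < 2 * (S + R) := by
    rw [abs_lt] at h1 h2 ⊢
    rcases hs₁ with rfl | rfl <;> rcases hs₂ with rfl | rfl <;>
      constructor <;> linarith [h1.1, h1.2, h2.1, h2.2, hD]
  refine ⟨⟨s₂, -(s₂ * s₁), hs₂, ?_, main⟩, ?_⟩
  · rcases hs₁ with rfl | rfl <;> rcases hs₂ with rfl | rfl <;> norm_num
  · rw [abs_lt] at main ⊢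
    rcases hs₁ with rfl | rfl <;> rcases hs₂ with rfl | rfl <;>
      constructor <;> linarith [main.1, main.2, hBd.1, hBd.2]
end
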